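/- For any LTLf formula φ over variables P, the set Q of states reachable from [φ]≡ under the translation tr (taking leaves of tr(q) repeatedly) is finite, with |Q| ≤ 2^(2^|sf(φ)|), where sf(φ) is the set of subformulas of φ. -/

import Mathlib

/-!
On a letter `w`, the formula labelling the terminal of `tr q` is, propositionally, the one-step
expansion of `q`. Expansion turns valuations that agree on `sf φ` into valuations that agree on
`sf φ`, because `sf φ` is closed under subformulas. Hence every reachable state is, up to
propositional equivalence, a Boolean combination of formulas of `sf φ`, and there are at most
`2^(2^|sf φ|)` such classes. Reachable states are fixed points of `rep`, so distinct ones lie in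
distinct classes. That each terminal of `tr q` is the value of `tr q` on some letter holds because
`tr q` is an ordered MTBDD.
-/

inductive LTLf (P : Type) : Type where
  | tt : LTLf P
  | ff : LTLf P
  | atom (p : P) : LTLf P
  | not (φ : LTLf P) : LTLf P
  | and (φ ψ : LTLf P) : LTLf P
  | or (φ ψ : LTLf P) : LTLf P
  | wnext (φ : LTLf P) : LTLf P
  | snext (φ : LTLf P) : LTLf P
  | untl (φ ψ : LTLf P) : LTLf P
  | release (φ ψ : LTLf P) : LTLf P
  | glob (φ : LTLf P) : LTLf P
  | fin (φ : LTLf P) : LTLf P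
  deriving DecidableEq

/-- LTLf semantics over a finite word `σ` (a list of assignments), at position `i`. -/
def LTLf.Sat {P : Type} (σ : List (P → Bool)) : LTLf P → ℕ → Prop
  | .tt, _ => True
  | .ff, _ => False
  | .atom p, i => (σ.getD i (fun _ => false)) p = true
  | .not φ, i => ¬ LTLf.Sat σ φ i
  | .and φ ψ, i => LTLf.Sat σ φ i ∧ LTLf.Sat σ ψ i
  | .or φ ψ, i => LTLf.Sat σ φ i ∨ LTLf.Sat σ ψ i
  | .wnext φ, i => i + 1 = σ.length ∨ LTLf.Sat σ φ (i + 1)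
  | .snext φ, i => i + 1 < σ.length ∧ LTLf.Sat σ φ (i + 1)
  | .untl φ ψ, i => ∃ j, i ≤ j ∧ j < σ.length ∧ LTLf.Sat σ ψ j ∧
      ∀ k, i ≤ k → k < j → LTLf.Sat σ φ k
  | .release φ ψ, i => ∀ j, i ≤ j → j < σ.length →
      LTLf.Sat σ ψ j ∨ ∃ k, i ≤ k ∧ k < j ∧ LTLf.Sat σ φ k
  | .glob φ, i => ∀ j, i ≤ j → j < σ.length → LTLf.Sat σ φ j
  | .fin φ, i => ∃ j, i ≤ j ∧ j < σ.length ∧ LTLf.Sat σ φ j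

/-- Boolean evaluation of the propositional abstraction of an LTLf formula:
atoms and maximal temporal subformulas are treated as propositional variables,
interpreted by a valuation `v`. -/
def LTLf.BEval {P : Type} (v : LTLf P → Prop) : LTLf P → Prop
  | .tt => True
  | .ff => False
  | .not φ => ¬ LTLf.BEval v φ
  | .and φ ψ => LTLf.BEval v φ ∧ LTLf.BEval v ψ
  | .or φ ψ => LTLf.BEval v φ ∨ LTLf.BEval v ψ
  | φ => v φ

/-- Propositional equivalence: the propositional abstractions are equivalent
Boolean formulas, i.e., agree under every valuation of the variables. -/
def LTLf.PropEquiv {P : Type} (α β : LTLf P) : Prop :=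
  ∀ v : LTLf P → Prop, LTLf.BEval v α ↔ LTLf.BEval v β

/-- MTBDDs (as decision trees; sharing of isomorphic subgraphs corresponds to
equality of subtrees) over variables `Fin n` with terminal values in `S`. -/
inductive MTBDD (n : ℕ) (S : Type) : Type where
  | leaf (s : S) : MTBDD n S
  | node (p : Fin n) (lo hi : MTBDD n S) : MTBDD n S
  deriving DecidableEq

namespace MTBDD

/-- The function `B^P → S` denoted by an MTBDD. -/
def eval {n : ℕ} {S : Type} : MTBDD n S → (Fin n → Bool) → S
  | .leaf s, _ => s
  | .node p lo hi, w => if w p then eval hi w else eval lo w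

/-- All branches test variables in strictly increasing order, starting at least at `b`. -/
def OrderedFrom {n : ℕ} {S : Type} : ℕ → MTBDD n S → Prop
  | _, .leaf _ => True
  | b, .node p lo hi => b ≤ (p : ℕ) ∧ OrderedFrom ((p : ℕ) + 1) lo ∧ OrderedFrom ((p : ℕ) + 1) hi

/-- Ordered MTBDD. -/
def Ordered {n : ℕ} {S : Type} (m : MTBDD n S) : Prop := OrderedFrom 0 m

/-- Reduced MTBDD: no internal node has identical low and high successors
(isomorphic subgraphs being shared, they are represented by equal subtrees). -/
def Reduced {n : ℕ} {S : Type} : MTBDD n S → Prop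
  | .leaf _ => True
  | .node _ lo hi => lo ≠ hi ∧ Reduced lo ∧ Reduced hi

end MTBDD

namespace MTBDD

/-- Apply a function to every terminal of an MTBDD. -/
def mapLeaf {n : ℕ} {S T : Type} (f : S → T) : MTBDD n S → MTBDD n T
  | .leaf s => .leaf (f s)
  | .node p lo hi => .node p (mapLeaf f lo) (mapLeaf f hi)

/-- The recursive `apply` procedure combining two MTBDDs with a binary
operation on terminals, recursing on the topmost variable. -/
def apply {n : ℕ} {S₁ S₂ S₃ : Type} (op : S₁ → S₂ → S₃) :
    MTBDD n S₁ → MTBDD n S₂ → MTBDD n S₃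
  | .leaf a, .leaf b => .leaf (op a b)
  | .leaf a, .node q lo hi => .node q (apply op (.leaf a) lo) (apply op (.leaf a) hi)
  | .node p lo hi, .leaf b => .node p (apply op lo (.leaf b)) (apply op hi (.leaf b))
  | .node p lo hi, .node q lo' hi' =>
    if p < q then
      .node p (apply op lo (.node q lo' hi')) (apply op hi (.node q lo' hi'))
    else if q < p then
      .node q (apply op (.node p lo hi) lo') (apply op (.node p lo hi) hi')
    else
      .node p (apply op lo lo') (apply op hi hi')
  termination_by m₁ m₂ => sizeOf m₁ + sizeOf m₂
  decreasing_by all_goals simp +arith +decide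

/-- The list of terminal values appearing in an MTBDD. -/
def leavesList {n : ℕ} {S : Type} : MTBDD n S → List S
  | .leaf s => [s]
  | .node _ lo hi => leavesList lo ++ leavesList hi

end MTBDD

/-- Negation of an MTBDD with terminals in `LTLf × Bool`; the formula component
is taken up to propositional equivalence via the representative function `rep`. -/
def mnot {n : ℕ} (rep : LTLf (Fin n) → LTLf (Fin n)) :
    MTBDD n (LTLf (Fin n) × Bool) → MTBDD n (LTLf (Fin n) × Bool) :=
  MTBDD.mapLeaf (fun a => (rep (.not a.1), !a.2))

/-- Conjunction of MTBDDs with terminals in `LTLf × Bool`, combining terminals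
componentwise (formulas up to propositional equivalence via `rep`). -/
def mand {n : ℕ} (rep : LTLf (Fin n) → LTLf (Fin n)) :
    MTBDD n (LTLf (Fin n) × Bool) → MTBDD n (LTLf (Fin n) × Bool) →
      MTBDD n (LTLf (Fin n) × Bool) :=
  MTBDD.apply (fun a b => (rep (.and a.1 b.1), a.2 && b.2))

/-- Disjunction of MTBDDs with terminals in `LTLf × Bool`. -/
def mor {n : ℕ} (rep : LTLf (Fin n) → LTLf (Fin n)) :
    MTBDD n (LTLf (Fin n) × Bool) → MTBDD n (LTLf (Fin n) × Bool) →
      MTBDD n (LTLf (Fin n) × Bool) :=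
  MTBDD.apply (fun a b => (rep (.or a.1 b.1), a.2 || b.2))

/-- The translation `tr` from LTLf formulas to MTBDDs with terminals labeled by
pairs (formula, Boolean), formula components being taken up to propositional
equivalence through the representative function `rep`. -/
def tr {n : ℕ} (rep : LTLf (Fin n) → LTLf (Fin n)) :
    LTLf (Fin n) → MTBDD n (LTLf (Fin n) × Bool)
  | .tt => .leaf (rep .tt, true)
  | .ff => .leaf (rep .ff, false)
  | .atom p => .node p (.leaf (rep .ff, false)) (.leaf (rep .tt, true))
  | .not α => mnot rep (tr rep α)
  | .and α β => mand rep (tr rep α) (tr rep β)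
  | .or α β => mor rep (tr rep α) (tr rep β)
  | .wnext α => .leaf (rep α, true)
  | .snext α => .leaf (rep α, false)
  | .untl α β => mor rep (tr rep β) (mand rep (tr rep α) (.leaf (rep (.untl α β), false)))
  | .release α β => mand rep (tr rep β) (mor rep (tr rep α) (.leaf (rep (.release α β), true)))
  | .glob α => mand rep (tr rep α) (.leaf (rep (.glob α), true))
  | .fin α => mor rep (tr rep α) (.leaf (rep (.fin α), false))

/-- The set of subformulas of an LTLf formula. -/
def LTLf.sf {P : Type} [DecidableEq P] : LTLf P → Finset (LTLf P)
  | .tt => {.tt}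
  | .ff => {.ff}
  | .atom p => {.atom p}
  | .not φ => insert (.not φ) φ.sf
  | .and φ ψ => insert (.and φ ψ) (φ.sf ∪ ψ.sf)
  | .or φ ψ => insert (.or φ ψ) (φ.sf ∪ ψ.sf)
  | .wnext φ => insert (.wnext φ) φ.sf
  | .snext φ => insert (.snext φ) φ.sf
  | .untl φ ψ => insert (.untl φ ψ) (φ.sf ∪ ψ.sf)
  | .release φ ψ => insert (.release φ ψ) (φ.sf ∪ ψ.sf)
  | .glob φ => insert (.glob φ) φ.sf
  | .fin φ => insert (.fin φ) φ.sf

/-- The states reachable from `[φ]≡` by repeatedly taking formulas labeling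
the leaves of `tr`. -/
inductive Reach {n : ℕ} (rep : LTLf (Fin n) → LTLf (Fin n)) (φ : LTLf (Fin n)) :
    LTLf (Fin n) → Prop
  | init : Reach rep φ (rep φ)
  | step {q α : LTLf (Fin n)} {b : Bool} :
      Reach rep φ q → (α, b) ∈ (tr rep q).leavesList → Reach rep φ α

namespace LTLf

variable {P : Type}

theorem mem_sf_self [DecidableEq P] (γ : LTLf P) : γ ∈ γ.sf := by
  cases γ <;> simp [sf]

theorem sf_subset_of_mem [DecidableEq P] {γ τ : LTLf P} (h : τ ∈ γ.sf) : τ.sf ⊆ γ.sf := by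
  induction γ with
  | tt | ff | atom => simp only [sf, Finset.mem_singleton] at h; rw [h]
  | not _ ih | wnext _ ih | snext _ ih | glob _ ih | fin _ ih =>
    rcases Finset.mem_insert.mp h with rfl | h
    · rfl
    · exact (ih h).trans (Finset.subset_insert _ _)
  | and _ _ iha ihb | or _ _ iha ihb | untl _ _ iha ihb | release _ _ iha ihb =>
    rcases Finset.mem_insert.mp h with rfl | h
    · rfl
    · rcases Finset.mem_union.mp h with h | h
      · exact (iha h).trans (Finset.subset_union_left.trans (Finset.subset_insert _ _))
      · exact (ihb h).trans (Finset.subset_union_right.trans (Finset.subset_insert _ _))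

/-- `γ` is, up to propositional equivalence, a Boolean combination of formulas of `S`. -/
def DependsOnlyOn (S : Set (LTLf P)) (γ : LTLf P) : Prop :=
  ∀ u u' : LTLf P → Prop, Set.EqOn u u' S → BEval u γ = BEval u' γ

theorem dependsOnlyOn_sf [DecidableEq P] (γ : LTLf P) : DependsOnlyOn γ.sf γ := by
  intro u u' h
  induction γ with
  | tt | ff => rfl
  | atom | wnext | snext | untl | release | glob | fin => exact h (mem_sf_self _)
  | not a ih => simp only [BEval, ih (h.mono fun τ hτ => by simp [sf, hτ])]
  | and a b iha ihb | or a b iha ihb =>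
    simp only [BEval, iha (h.mono fun τ hτ => by simp [sf, hτ]),
      ihb (h.mono fun τ hτ => by simp [sf, hτ])]

/-- The truth value of `γ` on the letter `w` once every temporal operator is unfolded one step
(`α U β ≡ β ∨ (α ∧ X (α U β))`, ...), the obligations left for the next position being valued
by `u`. -/
def expansion (w : P → Bool) (u : LTLf P → Prop) : LTLf P → Prop
  | tt => True
  | ff => False
  | atom p => w p = true
  | not a => ¬ expansion w u a
  | and a b => expansion w u a ∧ expansion w u b
  | or a b => expansion w u a ∨ expansion w u b
  | wnext a => BEval u a
  | snext a => BEval u a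
  | untl a b => expansion w u b ∨ (expansion w u a ∧ u (untl a b))
  | release a b => expansion w u b ∧ (expansion w u a ∨ u (release a b))
  | glob a => expansion w u a ∧ u (glob a)
  | fin a => expansion w u a ∨ u (fin a)

theorem beval_expansion (w : P → Bool) (u : LTLf P → Prop) (γ : LTLf P) :
    BEval (expansion w u) γ = expansion w u γ := by
  induction γ <;> simp only [BEval, expansion, *]

theorem expansion_congr [DecidableEq P] (w : P → Bool) {u u' : LTLf P → Prop} {γ : LTLf P}
    (h : Set.EqOn u u' γ.sf) : expansion w u γ = expansion w u' γ := by
  induction γ with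
  | tt | ff | atom => rfl
  | wnext a | snext a => exact dependsOnlyOn_sf a u u' (h.mono fun τ hτ => by simp [sf, hτ])
  | not a ih => simp only [expansion, ih (h.mono fun τ hτ => by simp [sf, hτ])]
  | glob a ih | fin a ih =>
    simp only [expansion, ih (h.mono fun τ hτ => by simp [sf, hτ]), h (mem_sf_self _)]
  | and a b iha ihb | or a b iha ihb =>
    simp only [expansion, iha (h.mono fun τ hτ => by simp [sf, hτ]),
      ihb (h.mono fun τ hτ => by simp [sf, hτ])]
  | untl a b iha ihb | release a b iha ihb =>
    simp only [expansion, iha (h.mono fun τ hτ => by simp [sf, hτ]),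
      ihb (h.mono fun τ hτ => by simp [sf, hτ]), h (mem_sf_self _)]

theorem eqOn_expansion [DecidableEq P] (w : P → Bool) {u u' : LTLf P → Prop} {φ : LTLf P}
    (h : Set.EqOn u u' φ.sf) : Set.EqOn (expansion w u) (expansion w u') φ.sf :=
  fun _ hγ => expansion_congr w (h.mono (sf_subset_of_mem hγ))

theorem finite_and_card_le_of_dependsOnlyOn {Q : Set (LTLf P)} (S : Finset (LTLf P))
    (hdep : ∀ q ∈ Q, DependsOnlyOn S q) (hinj : ∀ q ∈ Q, ∀ q' ∈ Q, PropEquiv q q' → q = q') :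
    Q.Finite ∧ Nat.card Q ≤ 2 ^ 2 ^ S.card := by
  let extend (g : S → Prop) (τ : LTLf P) : Prop := ∃ h : τ ∈ S, g ⟨τ, h⟩
  have extend_eqOn (u : LTLf P → Prop) : Set.EqOn u (extend fun τ => u τ) S :=
    fun τ hτ => propext ⟨fun h => ⟨hτ, h⟩, fun ⟨_, h⟩ => h⟩
  let F (q : Q) (g : S → Prop) : Prop := BEval (extend g) q
  have hF : Function.Injective F := by
    rintro ⟨q, hq⟩ ⟨q', hq'⟩ hqq'
    refine Subtype.ext (hinj q hq q' hq' fun u => ?_)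
    rw [hdep q hq _ _ (extend_eqOn u), hdep q' hq' _ _ (extend_eqOn u)]
    exact iff_of_eq (congrFun hqq' fun τ => u τ)
  have : Finite Q := Finite.of_injective F hF
  refine ⟨Q.toFinite, ?_⟩
  calc Nat.card Q ≤ Nat.card ((S → Prop) → Prop) := Nat.card_le_card_of_injective F hF
    _ = 2 ^ 2 ^ S.card := by simp [Nat.card_fun]

end LTLf

namespace MTBDD

variable {n : ℕ}

theorem eval_mapLeaf {S T : Type} (f : S → T) (m : MTBDD n S) (w : Fin n → Bool) :
    (m.mapLeaf f).eval w = f (m.eval w) := by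
  induction m with
  | leaf => rfl
  | node p lo hi ihlo ihhi => simp only [mapLeaf, eval, ihlo, ihhi, apply_ite f]

theorem eval_apply {S₁ S₂ S₃ : Type} (op : S₁ → S₂ → S₃) (m₁ : MTBDD n S₁) (m₂ : MTBDD n S₂)
    (w : Fin n → Bool) : (apply op m₁ m₂).eval w = op (m₁.eval w) (m₂.eval w) := by
  induction m₁, m₂ using apply.induct with
  | case1 => simp [apply, eval]
  | case2 _ q _ _ ih₁ ih₂ => by_cases h : w q <;> simp [apply, eval, h, ih₁, ih₂]
  | case3 p _ _ _ ih₁ ih₂ => by_cases h : w p <;> simp [apply, eval, h, ih₁, ih₂]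
  | case4 p _ _ _ _ _ hpq ih₁ ih₂ => by_cases h : w p <;> simp [apply, eval, hpq, h, ih₁, ih₂]
  | case5 _ _ _ q _ _ hpq hqp ih₁ ih₂ =>
    by_cases h : w q <;> simp [apply, eval, hpq, hqp, h, ih₁, ih₂]
  | case6 p _ _ q _ _ hpq hqp ih₁ ih₂ =>
    obtain rfl : p = q := le_antisymm (not_lt.mp hqp) (not_lt.mp hpq)
    by_cases h : w p <;> simp [apply, eval, h, ih₁, ih₂]

theorem OrderedFrom.mapLeaf {S T : Type} (f : S → T) {b : ℕ} {m : MTBDD n S}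
    (h : OrderedFrom b m) : OrderedFrom b (m.mapLeaf f) := by
  induction m generalizing b with
  | leaf => trivial
  | node p lo hi ihlo ihhi => exact ⟨h.1, ihlo h.2.1, ihhi h.2.2⟩

theorem OrderedFrom.apply {S₁ S₂ S₃ : Type} (op : S₁ → S₂ → S₃) {b : ℕ} {m₁ : MTBDD n S₁}
    {m₂ : MTBDD n S₂} (h₁ : OrderedFrom b m₁) (h₂ : OrderedFrom b m₂) :
    OrderedFrom b (MTBDD.apply op m₁ m₂) := by
  induction m₁, m₂ using MTBDD.apply.induct generalizing b with
  | case1 => simp only [MTBDD.apply]; trivial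
  | case2 a q lo hi ih₁ ih₂ =>
    simp only [MTBDD.apply]
    exact ⟨h₂.1, ih₁ trivial h₂.2.1, ih₂ trivial h₂.2.2⟩
  | case3 p lo hi a ih₁ ih₂ =>
    simp only [MTBDD.apply]
    exact ⟨h₁.1, ih₁ h₁.2.1 trivial, ih₂ h₁.2.2 trivial⟩
  | case4 p lo hi q lo' hi' hpq ih₁ ih₂ =>
    have h₂' : OrderedFrom (p + 1) (node q lo' hi') := ⟨hpq, h₂.2⟩
    simp only [MTBDD.apply, if_pos hpq]
    exact ⟨h₁.1, ih₁ h₁.2.1 h₂', ih₂ h₁.2.2 h₂'⟩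
  | case5 p lo hi q lo' hi' hpq hqp ih₁ ih₂ =>
    have h₁' : OrderedFrom (q + 1) (node p lo hi) := ⟨hqp, h₁.2⟩
    simp only [MTBDD.apply, if_neg hpq, if_pos hqp]
    exact ⟨h₂.1, ih₁ h₁' h₂.2.1, ih₂ h₁' h₂.2.2⟩
  | case6 p lo hi q lo' hi' hpq hqp ih₁ ih₂ =>
    obtain rfl : p = q := le_antisymm (not_lt.mp hqp) (not_lt.mp hpq)
    simp only [MTBDD.apply, if_neg hpq]
    exact ⟨h₁.1, ih₁ h₁.2.1 h₂.2.1, ih₂ h₁.2.2 h₂.2.2⟩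

theorem OrderedFrom.eval_update_of_lt {S : Type} {b : ℕ} {m : MTBDD n S} (h : OrderedFrom b m)
    {p : Fin n} (hp : (p : ℕ) < b) (x : Bool) (w : Fin n → Bool) :
    m.eval (Function.update w p x) = m.eval w := by
  induction m generalizing b with
  | leaf => rfl
  | node q lo hi ihlo ihhi =>
    have hbq : b ≤ q := h.1
    have hpq : q ≠ p := fun hqp => by omega
    simp only [eval, Function.update_of_ne hpq, ihlo h.2.1 (by omega), ihhi h.2.2 (by omega)]

theorem OrderedFrom.exists_eval_eq {S : Type} {b : ℕ} {m : MTBDD n S} (h : OrderedFrom b m)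
    {s : S} (hs : s ∈ m.leavesList) : ∃ w, m.eval w = s := by
  induction m generalizing b with
  | leaf t => exact ⟨fun _ => false, (List.mem_singleton.mp hs).symm⟩
  | node p lo hi ihlo ihhi =>
    rcases List.mem_append.mp hs with hs | hs
    · obtain ⟨w, rfl⟩ := ihlo h.2.1 hs
      exact ⟨Function.update w p false, by
        simp [eval, h.2.1.eval_update_of_lt (Nat.lt_succ_self p)]⟩
    · obtain ⟨w, rfl⟩ := ihhi h.2.2 hs
      exact ⟨Function.update w p true, by
        simp [eval, h.2.2.eval_update_of_lt (Nat.lt_succ_self p)]⟩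

end MTBDD

section Translation

variable {n : ℕ} (rep : LTLf (Fin n) → LTLf (Fin n))

theorem tr_ordered (q : LTLf (Fin n)) : (tr rep q).Ordered := by
  induction q with
  | tt | ff | wnext | snext => trivial
  | atom p => exact ⟨Nat.zero_le _, trivial, trivial⟩
  | not _ ih => exact MTBDD.OrderedFrom.mapLeaf _ ih
  | and _ _ iha ihb | or _ _ iha ihb => exact MTBDD.OrderedFrom.apply _ iha ihb
  | untl _ _ iha ihb | release _ _ iha ihb =>
    exact MTBDD.OrderedFrom.apply _ ihb (MTBDD.OrderedFrom.apply _ iha trivial)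
  | glob _ ih | fin _ ih => exact MTBDD.OrderedFrom.apply _ ih trivial

theorem exists_eval_tr_eq_of_mem_leavesList {q α : LTLf (Fin n)} {b : Bool}
    (h : (α, b) ∈ (tr rep q).leavesList) : ∃ w, ((tr rep q).eval w).1 = α := by
  obtain ⟨w, hw⟩ := (tr_ordered rep q).exists_eval_eq h
  exact ⟨w, by rw [hw]⟩

theorem eval_tr_mem_range (q : LTLf (Fin n)) (w : Fin n → Bool) :
    ((tr rep q).eval w).1 ∈ Set.range rep := by
  cases q with
  | atom p => by_cases h : w p <;> simp [tr, MTBDD.eval, h]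
  | _ => simp [tr, mnot, mand, mor, MTBDD.eval_apply, MTBDD.eval_mapLeaf, MTBDD.eval]

variable {rep}

theorem rep_rep (hrep₁ : ∀ α, LTLf.PropEquiv (rep α) α)
    (hrep₂ : ∀ α β, LTLf.PropEquiv α β → rep α = rep β) (α : LTLf (Fin n)) :
    rep (rep α) = rep α :=
  hrep₂ _ _ (hrep₁ α)

theorem beval_eval_tr (hrep₁ : ∀ α, LTLf.PropEquiv (rep α) α) (q : LTLf (Fin n))
    (w : Fin n → Bool) (u : LTLf (Fin n) → Prop) :
    LTLf.BEval u ((tr rep q).eval w).1 = LTLf.expansion w u q := by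
  have hrep (γ : LTLf (Fin n)) : LTLf.BEval u (rep γ) = LTLf.BEval u γ := propext (hrep₁ γ u)
  induction q with
  | atom p => by_cases h : w p <;> simp [tr, MTBDD.eval, LTLf.expansion, LTLf.BEval, hrep, h]
  | _ => simp [tr, mnot, mand, mor, MTBDD.eval_apply, MTBDD.eval_mapLeaf, MTBDD.eval,
      LTLf.expansion, LTLf.BEval, *]

end Translation

namespace Reach

variable {n : ℕ} {rep : LTLf (Fin n) → LTLf (Fin n)} {φ q : LTLf (Fin n)}

theorem rep_eq (hrep₁ : ∀ α, LTLf.PropEquiv (rep α) α)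
    (hrep₂ : ∀ α β, LTLf.PropEquiv α β → rep α = rep β) (hq : Reach rep φ q) : rep q = q := by
  induction hq with
  | init => exact rep_rep hrep₁ hrep₂ φ
  | @step q _ _ _ hmem _ =>
    obtain ⟨w, rfl⟩ := exists_eval_tr_eq_of_mem_leavesList rep hmem
    obtain ⟨γ, hγ⟩ := eval_tr_mem_range rep q w
    rw [← hγ, rep_rep hrep₁ hrep₂]

theorem dependsOnlyOn_sf (hrep₁ : ∀ α, LTLf.PropEquiv (rep α) α) (hq : Reach rep φ q) :
    LTLf.DependsOnlyOn φ.sf q := by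
  induction hq with
  | init =>
    intro u u' h
    rw [propext (hrep₁ φ u), propext (hrep₁ φ u'), LTLf.dependsOnlyOn_sf φ u u' h]
  | @step q _ _ _ hmem ih =>
    obtain ⟨w, rfl⟩ := exists_eval_tr_eq_of_mem_leavesList rep hmem
    intro u u' h
    calc LTLf.BEval u ((tr rep q).eval w).1
        = LTLf.BEval (LTLf.expansion w u) q := by
          rw [beval_eval_tr hrep₁, LTLf.beval_expansion]
      _ = LTLf.BEval (LTLf.expansion w u') q := ih _ _ (LTLf.eqOn_expansion w h)
      _ = LTLf.BEval u' ((tr rep q).eval w).1 := by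
          rw [beval_eval_tr hrep₁, LTLf.beval_expansion]

end Reach

/-- The set of states of the MTDFA of `φ` is finite, of cardinality at most
`2^(2^|sf(φ)|)`. -/
theorem reachable_states_finite {n : ℕ} (rep : LTLf (Fin n) → LTLf (Fin n))
    (hrep₁ : ∀ α, LTLf.PropEquiv (rep α) α)
    (hrep₂ : ∀ α β, LTLf.PropEquiv α β → rep α = rep β)
    (φ : LTLf (Fin n)) :
    {q | Reach rep φ q}.Finite ∧
      Nat.card {q | Reach rep φ q} ≤ 2 ^ (2 ^ (LTLf.sf φ).card) := by
  refine LTLf.finite_and_card_le_of_dependsOnlyOn φ.sf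
    (fun q hq => hq.dependsOnlyOn_sf hrep₁) fun q hq q' hq' hqq' => ?_
  rw [← hq.rep_eq hrep₁ hrep₂, ← hq'.rep_eq hrep₁ hrep₂]
  exact hrep₂ q q' hqq'
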